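/- arXiv:1803.06439 — 2 statements merged into one kernel-verified Lean document; each statement's English description precedes it below -/
import Mathlib

section
/- Let V(x1,x2) = (x1^2+x2^2)/2 + x1^2*x2 - x2^3/3 and fix a real number E with 0 < E < 1/6. Define G_E(x1,x2) = 2*(E - V)*(1 - 4*x1^2 - 4*x2^2) + (1 - 6*V)*(x1^2 + x2^2). Then for every (x1,x2) in R^2 satisfying x1^2 + x2^2 < 1 and V(x1,x2) < E, one has G_E(x1,x2) > 0. -/
noncomputable def henonV (x1 x2 : ℝ) : ℝ :=
  (x1^2 + x2^2)/2 + x1^2*x2 - x2^3/3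

noncomputable def henonG (E x1 x2 : ℝ) : ℝ :=
  2*(E - henonV x1 x2)*(1 - 4*x1^2 - 4*x2^2) + (1 - 6*henonV x1 x2)*(x1^2 + x2^2)

theorem henonG_eq (E x1 x2 : ℝ) :
    henonG E x1 x2 =
      2 * (E - henonV x1 x2) * (1 - (x1^2 + x2^2)) + (1 - 6*E) * (x1^2 + x2^2) := by
  unfold henonG
  ring

theorem stmt_1_general (E : ℝ) (hE : E < 1/6)
    (x1 x2 : ℝ) (hdisk : x1^2 + x2^2 < 1) (hV : henonV x1 x2 < E) :
    0 < henonG E x1 x2 := by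
  rw [henonG_eq]
  have hdepth : 0 < E - henonV x1 x2 := sub_pos.mpr hV
  have hdisk' : 0 < 1 - (x1^2 + x2^2) := sub_pos.mpr hdisk
  have hE' : 0 ≤ 1 - 6*E := by linarith
  positivity

theorem stmt_1 (E : ℝ) (hE0 : 0 < E) (hE : E < 1/6)
    (x1 x2 : ℝ) (hdisk : x1^2 + x2^2 < 1) (hV : henonV x1 x2 < E) :
    0 < henonG E x1 x2 :=
  stmt_1_general E hE x1 x2 hdisk hV
end

section
/- Let Q : C → C be a polynomial of degree d ≥ 2 and let w1 ≠ w2 be complex numbers. It is impossible that every root of Q(z) - w1 has multiplicity ≥ 2 and simultaneously every root of Q(z) - w2 has multiplicity ≥ 2. -/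
/-!
Over an algebraically closed field of characteristic zero, `p - C a` and `p - C b` have the same
derivative `p'`, and a root of multiplicity `m ≥ 2` of either is a root of `p'` of multiplicity
`m - 1 ≥ m / 2`. If all roots of both were multiple, the two (disjoint) root sets would carry at
least `deg p / 2` roots of `p'` each, i.e. `p'` would have at least `deg p` roots, one more than
its degree allows.
-/

open Polynomial

namespace Polynomial

theorem roots_le_two_nsmul_filter_roots_derivative {R : Type*} [CommRing R] [IsDomain R]
    [CharZero R] [DecidableEq R] {p : R[X]}
    (hmult : ∀ z, p.IsRoot z → 2 ≤ p.rootMultiplicity z) :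
    p.roots ≤ 2 • p.derivative.roots.filter p.IsRoot := by
  refine Multiset.le_iff_count.2 fun z => ?_
  rw [Multiset.count_nsmul, Multiset.count_filter, count_roots]
  by_cases hz : p.IsRoot z
  · rw [if_pos hz, count_roots, derivative_rootMultiplicity_of_root hz]
    have := hmult z hz
    omega
  · simp [rootMultiplicity_eq_zero hz]

variable {K : Type*} [Field K] [IsAlgClosed K] [CharZero K]

theorem natDegree_le_two_mul_card_filter_roots_derivative [DecidableEq K] {p : K[X]} {a : K}
    (hmult : ∀ z, (p - C a).IsRoot z → 2 ≤ (p - C a).rootMultiplicity z) :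
    p.natDegree ≤ 2 * Multiset.card (p.derivative.roots.filter (p - C a).IsRoot) := by
  have hle := Multiset.card_le_card (roots_le_two_nsmul_filter_roots_derivative hmult)
  rwa [IsAlgClosed.card_roots_eq_natDegree, natDegree_sub_C, derivative_sub, derivative_C, sub_zero,
    Multiset.card_nsmul] at hle

theorem not_forall_two_le_rootMultiplicity_sub_C {p : K[X]} (hp : 0 < p.natDegree) {a b : K}
    (hab : a ≠ b) (ha : ∀ z, (p - C a).IsRoot z → 2 ≤ (p - C a).rootMultiplicity z)
    (hb : ∀ z, (p - C b).IsRoot z → 2 ≤ (p - C b).rootMultiplicity z) : False := by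
  classical
  have hdeg_a := natDegree_le_two_mul_card_filter_roots_derivative ha
  have hdeg_b := natDegree_le_two_mul_card_filter_roots_derivative hb
  set R := p.derivative.roots
  have hdisj : ∀ z, ¬((p - C a).IsRoot z ∧ (p - C b).IsRoot z) := fun z ⟨hza, hzb⟩ => by
    simp only [IsRoot, eval_sub, eval_C, sub_eq_zero] at hza hzb
    exact hab (hza.symm.trans hzb)
  have hsplit : (R.filter (p - C a).IsRoot).card + (R.filter (p - C b).IsRoot).card ≤ R.card := by
    rw [← Multiset.card_add, Multiset.filter_add_filter,
      Multiset.filter_eq_nil.2 fun z _ => hdisj z, add_zero]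
    exact Multiset.card_le_card (Multiset.filter_le _ _)
  have hR : R.card ≤ p.natDegree - 1 :=
    (card_roots' _).trans (natDegree_derivative_le p)
  omega

end Polynomial

theorem stmt_6 (Q : Polynomial ℂ) (d : ℕ) (w1 w2 : ℂ)
    (hdeg : Q.natDegree = d) (hd : 2 ≤ d) (hne : w1 ≠ w2) :
    ¬ ((∀ z : ℂ, (Q - C w1).IsRoot z → 2 ≤ (Q - C w1).rootMultiplicity z)
      ∧ (∀ z : ℂ, (Q - C w2).IsRoot z → 2 ≤ (Q - C w2).rootMultiplicity z)) :=
  fun ⟨h1, h2⟩ => not_forall_two_le_rootMultiplicity_sub_C (by omega) hne h1 h2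
end
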